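/- Let X be an infinite-dimensional real Banach space and let x ∈ S_X be an asymptotically smooth point, i.e., lim_{t→0+} ρ̄(t,x)/t = 0, where for t > 0 the modulus of asymptotic smoothness at x is ρ̄(t,x) := inf_Y sup{ ‖x + t y‖ − 1 : y ∈ Y, ‖y‖ = 1 }, the infimum taken over all closed subspaces Y of X of finite codimension. Then x is not a 𝔇-point. -/

import Mathlib

open NormedSpace Topology Filter

/-- `x` is a 𝔇-point of the real Banach space `X`. -/
def IsDPoint (X : Type*) [NormedAddCommGroup X] [NormedSpace ℝ X] (x : X) : Prop :=
  ‖x‖ = 1 ∧ ∀ f : StrongDual ℝ X, ‖f‖ = 1 → f x = 1 → ∀ ε : ℝ, 0 < ε →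
    sSup ((fun y => ‖x - y‖) '' {y : X | ‖y‖ ≤ 1 ∧ 1 - ε < f y}) = 2

/-- The modulus of asymptotic smoothness `ρ̄(t, x)` of `X` at `x`:
the infimum over all closed finite-codimensional subspaces `Y` of `X` of
`sup { ‖x + t • y‖ - 1 : y ∈ Y, ‖y‖ = 1 }`. -/
noncomputable def asymptoticSmoothnessModulus (X : Type*) [NormedAddCommGroup X]
    [NormedSpace ℝ X] (t : ℝ) (x : X) : ℝ :=
  sInf { r : ℝ | ∃ Y : Submodule ℝ X, IsClosed (Y : Set X) ∧
    FiniteDimensional ℝ (X ⧸ Y) ∧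
    r = sSup { s : ℝ | ∃ y ∈ Y, ‖y‖ = 1 ∧ s = ‖x + t • y‖ - 1 } }

/-!
If `‖x + t y‖ ≤ 1 + tδ` on the unit sphere of a finite-codimensional subspace `Y`, then every
`φ ∈ B_{X*}` with `φ x ≥ 1 - tδ` has `‖φ|_Y‖ ≤ 2δ`, so by Hahn–Banach it lies within `2δ` of the
finite-dimensional annihilator `Y^⊥`. For an asymptotically smooth point this makes `D(x)` norm
compact and every almost norming functional of `x` close to `D(x)`.

A 𝔇-point is incompatible with this. Let `F₁, …, F_k` be a `1/4`-net of `D(x)` and `m ∈ D(x)`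
their average. A point `z` of a thin slice of `m` with `‖x - z‖` close to `2` lies in thin slices
of every `Fᵢ`, while a functional norming `x - z` almost norms `x`, is close to `-1` at `z`, and is
within `1/2` of some `Fᵢ`.
-/

open Metric Set

namespace Submodule

variable {𝕜 E : Type*} [NontriviallyNormedField 𝕜] [NormedAddCommGroup E] [NormedSpace 𝕜 E]

def strongDualAnnihilator (Y : Submodule 𝕜 E) : Submodule 𝕜 (StrongDual 𝕜 E) :=
  Y.dualAnnihilator.comap (ContinuousLinearMap.coeLM 𝕜)

theorem mem_strongDualAnnihilator {Y : Submodule 𝕜 E} {ψ : StrongDual 𝕜 E} :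
    ψ ∈ Y.strongDualAnnihilator ↔ ∀ y ∈ Y, ψ y = 0 := by
  simp [strongDualAnnihilator, mem_dualAnnihilator]

instance finiteDimensional_strongDualAnnihilator (Y : Submodule 𝕜 E)
    [FiniteDimensional 𝕜 (E ⧸ Y)] : FiniteDimensional 𝕜 Y.strongDualAnnihilator := by
  have : FiniteDimensional 𝕜 Y.dualAnnihilator := finite_dualAnnihilator_iff.2 ‹_›
  have : FiniteDimensional 𝕜 (LinearMap.ker
      (ContinuousLinearMap.coeLM 𝕜 : StrongDual 𝕜 E →ₗ[𝕜] Module.Dual 𝕜 E)) := by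
    rw [LinearMap.ker_eq_bot.2 ContinuousLinearMap.coe_injective]
    infer_instance
  unfold strongDualAnnihilator
  infer_instance

theorem exists_mem_strongDualAnnihilator_norm_sub_eq {𝕜 : Type*} [RCLike 𝕜] [NormedSpace 𝕜 E]
    (Y : Submodule 𝕜 E) (φ : StrongDual 𝕜 E) :
    ∃ ψ ∈ Y.strongDualAnnihilator, ‖φ - ψ‖ = ‖φ.comp Y.subtypeL‖ := by
  obtain ⟨g, hg, hgn⟩ := exists_extension_norm_eq Y (φ.comp Y.subtypeL)
  refine ⟨φ - g, mem_strongDualAnnihilator.2 fun y hy => ?_, by rw [sub_sub_cancel, hgn]⟩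
  simpa [sub_eq_zero] using (hg ⟨y, hy⟩).symm

end Submodule

section

variable {X : Type*} [NormedAddCommGroup X] [NormedSpace ℝ X]

/-- `D(x)` for `‖x‖ = 1`, where `‖φ‖ ≤ 1` and `φ x = 1` force `‖φ‖ = 1`. -/
def dualFace (x : X) : Set (StrongDual ℝ X) := {φ | ‖φ‖ ≤ 1 ∧ φ x = 1}

theorem norm_eq_one_of_mem_dualFace {x : X} (hx : ‖x‖ = 1) {φ : StrongDual ℝ X}
    (hφ : φ ∈ dualFace x) : ‖φ‖ = 1 := by
  refine hφ.1.antisymm ?_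
  simpa [hφ.2, hx] using φ.le_opNorm x

theorem isClosed_dualFace (x : X) : IsClosed (dualFace x) :=
  (isClosed_le continuous_norm continuous_const).inter
    (isClosed_eq (ContinuousLinearMap.apply ℝ ℝ x).continuous continuous_const)

theorem convex_dualFace (x : X) : Convex ℝ (dualFace x) := by
  have : dualFace x = closedBall 0 1 ∩ {φ | φ x = 1} := by
    ext
    simp [dualFace]
  rw [this]
  exact (convex_closedBall 0 1).inter
    (convex_hyperplane (ContinuousLinearMap.apply ℝ ℝ x).isLinear 1)

theorem apply_le_norm_mul_norm (φ : StrongDual ℝ X) (z : X) : φ z ≤ ‖φ‖ * ‖z‖ :=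
  (Real.le_norm_self _).trans (φ.le_opNorm z)

theorem apply_le_one {φ : StrongDual ℝ X} (hφ : ‖φ‖ ≤ 1) {z : X} (hz : ‖z‖ ≤ 1) : φ z ≤ 1 :=
  (apply_le_norm_mul_norm φ z).trans (mul_le_one₀ hφ (norm_nonneg z) hz)

theorem exists_subspace_of_asymptoticSmoothnessModulus_lt {x : X} {t r : ℝ}
    (h : asymptoticSmoothnessModulus X t x < r) :
    ∃ Y : Submodule ℝ X, FiniteDimensional ℝ (X ⧸ Y) ∧
      ∀ y ∈ Y, ‖y‖ = 1 → ‖x + t • y‖ - 1 < r := by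
  obtain ⟨_, ⟨Y, -, hY, rfl⟩, hlt⟩ :=
    exists_lt_of_csInf_lt (by exact ⟨_, ⊤, by simp, inferInstance, rfl⟩) h
  have hbdd : BddAbove {s : ℝ | ∃ y ∈ Y, ‖y‖ = 1 ∧ s = ‖x + t • y‖ - 1} := by
    refine ⟨‖x‖ + |t| - 1, ?_⟩
    rintro _ ⟨z, -, hz, rfl⟩
    have := norm_add_le x (t • z)
    rw [norm_smul, hz, Real.norm_eq_abs] at this
    linarith
  exact ⟨Y, hY, fun y hy hy1 => (le_csSup hbdd ⟨y, hy, hy1, rfl⟩).trans_lt hlt⟩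

theorem norm_comp_subtypeL_le_of_norm_add_smul_le {x : X} {Y : Submodule ℝ X} {t δ : ℝ}
    (ht : 0 < t) (hδ : 0 ≤ δ)
    (hY : ∀ y ∈ Y, ‖y‖ = 1 → ‖x + t • y‖ ≤ 1 + t * δ) {φ : StrongDual ℝ X} (hφ : ‖φ‖ ≤ 1)
    (hφx : 1 - t * δ ≤ φ x) : ‖φ.comp Y.subtypeL‖ ≤ 2 * δ := by
  have hupper : ∀ y ∈ Y, ‖y‖ = 1 → φ y ≤ 2 * δ := by
    intro y hy hy1
    have hle : φ (x + t • y) ≤ 1 + t * δ :=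
      (apply_le_norm_mul_norm φ _).trans (by nlinarith [hY y hy hy1, norm_nonneg (x + t • y)])
    rw [map_add, map_smul, smul_eq_mul] at hle
    nlinarith
  refine ContinuousLinearMap.opNorm_le_of_unit_norm (by positivity) fun y hy1 => ?_
  change |φ y| ≤ 2 * δ
  rw [abs_le]
  have hneg := hupper (-y) (Y.neg_mem y.2) (by rwa [norm_neg])
  simp only [map_neg] at hneg
  exact ⟨by linarith, hupper y y.2 hy1⟩

section AsymptoticallySmooth

variable {x : X}
  (hsmooth : Tendsto (fun t => asymptoticSmoothnessModulus X t x / t) (𝓝[>] 0) (𝓝 0))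
include hsmooth

theorem exists_subspace_norm_add_smul_le_of_tendsto {δ : ℝ} (hδ : 0 < δ) :
    ∃ t > 0, ∃ Y : Submodule ℝ X, FiniteDimensional ℝ (X ⧸ Y) ∧
      ∀ y ∈ Y, ‖y‖ = 1 → ‖x + t • y‖ ≤ 1 + t * δ := by
  obtain ⟨t, hlt, ht⟩ := ((hsmooth.eventually_lt_const hδ).and self_mem_nhdsWithin).exists
  obtain ⟨Y, hY, hbound⟩ :=
    exists_subspace_of_asymptoticSmoothnessModulus_lt ((div_lt_iff₀ ht).1 hlt)
  exact ⟨t, ht, Y, hY, fun y hy hy1 => by linarith [hbound y hy hy1]⟩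

theorem exists_finite_cover_of_tendsto {ε : ℝ} (hε : 0 < ε) :
    ∃ η > 0, ∃ T : Set (StrongDual ℝ X), T.Finite ∧
      ∀ φ : StrongDual ℝ X, ‖φ‖ ≤ 1 → 1 - η < φ x → ∃ τ ∈ T, dist φ τ < ε := by
  obtain ⟨t, ht, Y, hY, hbound⟩ :=
    exists_subspace_norm_add_smul_le_of_tendsto hsmooth (by positivity : 0 < ε / 4)
  let K : Set (StrongDual ℝ X) := (↑) '' closedBall (0 : Y.strongDualAnnihilator) (1 + ε)
  have hK : IsCompact K := (isCompact_closedBall _ _).image continuous_subtype_val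
  obtain ⟨T, -, hT, hcover⟩ := hK.finite_cover_balls (half_pos hε)
  refine ⟨t * (ε / 4), by positivity, T, hT, fun φ hφ hφx => ?_⟩
  obtain ⟨ψ, hψY, hψ⟩ := Y.exists_mem_strongDualAnnihilator_norm_sub_eq φ
  have hφψ : ‖φ - ψ‖ ≤ ε / 2 := by
    rw [hψ]
    linarith [norm_comp_subtypeL_le_of_norm_add_smul_le ht (by positivity) hbound hφ hφx.le]
  have hψK : ψ ∈ K := by
    refine ⟨⟨ψ, hψY⟩, mem_closedBall_zero_iff.2 ?_, rfl⟩
    have := norm_le_insert' ψ φ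
    rw [norm_sub_rev] at this
    change ‖ψ‖ ≤ 1 + ε
    linarith
  obtain ⟨τ, hτ, hψτ⟩ := mem_iUnion₂.1 (hcover hψK)
  refine ⟨τ, hτ, ?_⟩
  calc dist φ τ ≤ dist φ ψ + dist ψ τ := dist_triangle _ _ _
    _ < ε / 2 + ε / 2 := add_lt_add_of_le_of_lt (by rwa [dist_eq_norm]) hψτ
    _ = ε := add_halves ε

theorem isCompact_dualFace : IsCompact (dualFace x) := by
  refine TotallyBounded.isCompact_of_isClosed (totallyBounded_iff.2 fun ε hε => ?_)
    (isClosed_dualFace x)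
  obtain ⟨η, hη, T, hT, hcover⟩ := exists_finite_cover_of_tendsto hsmooth hε
  refine ⟨T, hT, fun φ hφ => ?_⟩
  obtain ⟨τ, hτ, hd⟩ := hcover φ hφ.1 (hφ.2 ▸ sub_lt_self 1 hη)
  exact mem_iUnion₂.2 ⟨τ, hτ, hd⟩

theorem totallyBounded_range_of_tendsto_apply {φ : ℕ → StrongDual ℝ X} (hφ : ∀ n, ‖φ n‖ ≤ 1)
    (hφx : Tendsto (fun n => φ n x) atTop (𝓝 1)) : TotallyBounded (range φ) := by
  refine totallyBounded_iff.2 fun ε hε => ?_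
  obtain ⟨η, hη, T, hT, hcover⟩ := exists_finite_cover_of_tendsto hsmooth hε
  obtain ⟨N, hN⟩ := eventually_atTop.1 (hφx.eventually_const_lt (sub_lt_self 1 hη))
  refine ⟨T ∪ φ '' Iio N, hT.union ((finite_Iio N).image φ), ?_⟩
  rintro _ ⟨n, rfl⟩
  rcases lt_or_ge n N with hn | hn
  · exact mem_biUnion (mem_union_right _ (mem_image_of_mem φ hn)) (mem_ball_self hε)
  · obtain ⟨τ, hτ, hd⟩ := hcover (φ n) (hφ n) (hN n hn)
    exact mem_biUnion (mem_union_left _ hτ) hd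

theorem exists_subseq_tendsto_mem_dualFace {φ : ℕ → StrongDual ℝ X} (hφ : ∀ n, ‖φ n‖ ≤ 1)
    (hφx : Tendsto (fun n => φ n x) atTop (𝓝 1)) :
    ∃ ψ ∈ dualFace x, ∃ s : ℕ → ℕ, StrictMono s ∧ Tendsto (φ ∘ s) atTop (𝓝 ψ) := by
  have hK := (totallyBounded_range_of_tendsto_apply hsmooth hφ hφx).closure.isCompact_of_isClosed
    isClosed_closure
  obtain ⟨ψ, hψ, s, hs, hlim⟩ := hK.tendsto_subseq fun n => subset_closure (mem_range_self n)
  refine ⟨ψ, ⟨?_, ?_⟩, s, hs, hlim⟩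
  · exact closure_minimal (range_subset_iff.2 hφ) (isClosed_le continuous_norm continuous_const) hψ
  · exact tendsto_nhds_unique (((ContinuousLinearMap.apply ℝ ℝ x).continuous.tendsto ψ).comp hlim)
      (hφx.comp hs.tendsto_atTop)

theorem exists_mem_dualFace_dist_lt (hx : ‖x‖ ≤ 1) {ε : ℝ} (hε : 0 < ε) :
    ∃ η > 0, ∀ φ : StrongDual ℝ X, ‖φ‖ ≤ 1 → 1 - η < φ x → ∃ ψ ∈ dualFace x, dist φ ψ < ε := by
  by_contra! h
  choose φ hφ hφx hfar using fun n : ℕ => h (1 / (n + 1)) Nat.one_div_pos_of_nat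
  have hlower : Tendsto (fun n : ℕ => 1 - 1 / ((n : ℝ) + 1)) atTop (𝓝 1) := by
    simpa using tendsto_const_nhds.sub (tendsto_one_div_add_atTop_nhds_zero_nat (𝕜 := ℝ))
  have hlim : Tendsto (fun n => φ n x) atTop (𝓝 1) :=
    tendsto_of_tendsto_of_tendsto_of_le_of_le hlower tendsto_const_nhds (fun n => (hφx n).le)
      fun n => apply_le_one (hφ n) hx
  obtain ⟨ψ, hψ, s, -, hlim'⟩ := exists_subseq_tendsto_mem_dualFace hsmooth hφ hlim
  obtain ⟨n, hn⟩ := (hlim'.eventually (ball_mem_nhds ψ hε)).exists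
  exact (hfar (s n) ψ hψ).not_gt hn

end AsymptoticallySmooth

theorem IsDPoint.exists_mem_slice_norm_sub_gt {x : X} (hD : IsDPoint X x) {m : StrongDual ℝ X}
    (hm : ‖m‖ = 1) (hmx : m x = 1) {δ : ℝ} (hδ : 0 < δ) :
    ∃ z : X, ‖z‖ ≤ 1 ∧ 1 - δ < m z ∧ 2 - δ < ‖x - z‖ := by
  have hx : x ∈ {y : X | ‖y‖ ≤ 1 ∧ 1 - δ < m y} := ⟨hD.1.le, by linarith⟩
  obtain ⟨_, ⟨z, hz, rfl⟩, hlt⟩ :=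
    exists_lt_of_lt_csSup ⟨_, mem_image_of_mem _ hx⟩
      (by rw [hD.2 m hm hmx δ hδ]; linarith : 2 - δ < _)
  exact ⟨z, hz.1, hz.2, hlt⟩

theorem exists_one_sub_lt_apply_and_apply_lt_neg_one_add {x z : X} (hx : ‖x‖ ≤ 1)
    (hz : ‖z‖ ≤ 1) {δ : ℝ} (hxz : 2 - δ < ‖x - z‖) :
    ∃ g : StrongDual ℝ X, ‖g‖ ≤ 1 ∧ 1 - δ < g x ∧ g z < -1 + δ := by
  obtain ⟨g, hg, hgxz⟩ := exists_dual_vector'' ℝ (x - z)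
  have hgx := apply_le_one hg hx
  have hgz := apply_le_one hg (norm_neg z ▸ hz)
  rw [map_sub, RCLike.ofReal_real_eq_id, id] at hgxz
  rw [map_neg] at hgz
  exact ⟨g, hg, by linarith, by linarith⟩

theorem one_sub_card_mul_lt_of_lt_average {ι : Type*} {T : Finset ι} {f : ι → ℝ}
    (hf : ∀ i ∈ T, f i ≤ 1) {δ : ℝ} (havg : 1 - δ < ∑ i ∈ T, (T.card : ℝ)⁻¹ * f i) {i : ι}
    (hi : i ∈ T) : 1 - T.card * δ < f i := by
  have hT : (0 : ℝ) < T.card := by exact_mod_cast Finset.card_pos.2 ⟨i, hi⟩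
  have hsingle : 1 - f i ≤ ∑ j ∈ T, (1 - f j) :=
    Finset.single_le_sum (f := fun j => 1 - f j) (fun j hj => sub_nonneg.2 (hf j hj)) hi
  rw [← Finset.mul_sum, lt_inv_mul_iff₀ hT] at havg
  rw [Finset.sum_sub_distrib, Finset.sum_const, nsmul_one] at hsingle
  nlinarith

theorem not_isDPoint_of_isCompact_dualFace {x : X} (hK : IsCompact (dualFace x))
    (happrox : ∀ ε > 0, ∃ η > 0, ∀ φ : StrongDual ℝ X, ‖φ‖ ≤ 1 → 1 - η < φ x →
      ∃ ψ ∈ dualFace x, dist φ ψ < ε) :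
    ¬ IsDPoint X x := by
  intro hD
  obtain ⟨T, hTK, hT, hcover⟩ := hK.finite_cover_balls (by norm_num : (0 : ℝ) < 1 / 4)
  obtain ⟨η, hη, happroxη⟩ := happrox (1 / 4) (by norm_num)
  lift T to Finset (StrongDual ℝ X) using hT
  obtain ⟨g₀, hg₀, hg₀x⟩ := exists_dual_vector'' ℝ x
  obtain ⟨F₀, hF₀, -⟩ := mem_iUnion₂.1 (hcover ⟨hg₀, by rw [hg₀x, hD.1]; rfl⟩)
  have hk : (0 : ℝ) < T.card := by exact_mod_cast Finset.card_pos.2 ⟨F₀, hF₀⟩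
  set m := ∑ F ∈ T, (T.card : ℝ)⁻¹ • F
  have hm : m ∈ dualFace x := (convex_dualFace x).sum_mem (fun _ _ => by positivity)
    (by simp [hk.ne']) fun F hF => hTK hF
  set δ := min η (T.card + 1 : ℝ)⁻¹
  have hδ : 0 < δ := lt_min hη (by positivity)
  have hkδ : (T.card + 1) * δ ≤ 1 :=
    (mul_le_mul_of_nonneg_left (min_le_right _ _) (by positivity)).trans_eq (by field_simp)
  obtain ⟨z, hz, hmz, hxz⟩ :=
    hD.exists_mem_slice_norm_sub_gt (norm_eq_one_of_mem_dualFace hD.1 hm) hm.2 hδ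
  obtain ⟨g, hg, hgx, hgz⟩ := exists_one_sub_lt_apply_and_apply_lt_neg_one_add hD.1.le hz hxz
  obtain ⟨ψ, hψ, hgψ⟩ := happroxη g hg (by linarith [min_le_left η (T.card + 1 : ℝ)⁻¹])
  obtain ⟨F, hF, hψF⟩ := mem_iUnion₂.1 (hcover hψ)
  have hFz : 1 - T.card * δ < F z := by
    refine one_sub_card_mul_lt_of_lt_average (fun F hF => apply_le_one (hTK hF).1 hz) ?_ hF
    simpa [m] using hmz
  have hFg : F z - g z < 1 / 2 := by
    have hdist : ‖F - g‖ < 1 / 2 := by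
      rw [← dist_eq_norm]
      linarith [dist_triangle_left F g ψ, mem_ball.1 hψF, dist_comm g ψ]
    have := apply_le_norm_mul_norm (F - g) z
    rw [sub_apply] at this
    nlinarith [norm_nonneg (F - g)]
  nlinarith

end

theorem asymptoticallySmoothPoint_not_dPoint
    (X : Type*) [NormedAddCommGroup X] [NormedSpace ℝ X]
    (x : X)
    (hsmooth : Tendsto (fun t => asymptoticSmoothnessModulus X t x / t)
      (nhdsWithin 0 (Set.Ioi 0)) (nhds 0)) :
    ¬ IsDPoint X x := fun hD =>
  not_isDPoint_of_isCompact_dualFace (isCompact_dualFace hsmooth)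
    (fun _ hε => exists_mem_dualFace_dist_lt hsmooth hD.1.le hε) hD
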